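/- arXiv:2001.10424 — 6 statements merged into one kernel-verified Lean document; each statement's English description precedes it below -/
import Mathlib

section
/- Let M = W + γ A N⁻¹ Aᵀ with W symmetric positive semi-definite, N symmetric positive definite, γ ≥ 0, and M invertible. Define u = w − M⁻¹(g + γ A N⁻¹ r) and b = r − Aᵀ M⁻¹(g + γ A N⁻¹ r). Then (w, p) solves the system W w + A p = g, Aᵀ w = r if and only if (u, p) solves M u + A p = 0, Aᵀ u = b. -/
open Matrix

theorem stmt_2 {m n : ℕ} (W : Matrix (Fin m) (Fin m) ℝ) (A : Matrix (Fin m) (Fin n) ℝ)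
    (N : Matrix (Fin n) (Fin n) ℝ) (γ : ℝ)
    (hW : W.PosSemidef) (hN : N.PosDef) (hγ : 0 ≤ γ)
    (M : Matrix (Fin m) (Fin m) ℝ) (hM : M = W + γ • (A * N⁻¹ * Aᵀ))
    (hMinv : IsUnit M)
    (g : Fin m → ℝ) (r : Fin n → ℝ) (w u : Fin m → ℝ) (p : Fin n → ℝ) (b : Fin n → ℝ)
    (hu : u = w - M⁻¹ *ᵥ (g + γ • ((A * N⁻¹) *ᵥ r)))
    (hb : b = r - Aᵀ *ᵥ (M⁻¹ *ᵥ (g + γ • ((A * N⁻¹) *ᵥ r)))) :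
    (W *ᵥ w + A *ᵥ p = g ∧ Aᵀ *ᵥ w = r) ↔ (M *ᵥ u + A *ᵥ p = 0 ∧ Aᵀ *ᵥ u = b) := by
  set s : Fin m → ℝ := g + γ • ((A * N⁻¹) *ᵥ r) with hs
  have hMM : M * M⁻¹ = 1 := Matrix.mul_nonsing_inv M ((Matrix.isUnit_iff_isUnit_det M).mp hMinv)
  have hk : M *ᵥ (M⁻¹ *ᵥ s) = s := by
    rw [Matrix.mulVec_mulVec, hMM, Matrix.one_mulVec]
  have hAu : Aᵀ *ᵥ u = Aᵀ *ᵥ w - Aᵀ *ᵥ (M⁻¹ *ᵥ s) := by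
    rw [hu, Matrix.mulVec_sub]
  have hsecond : Aᵀ *ᵥ u = b ↔ Aᵀ *ᵥ w = r := by
    rw [hAu, hb]
    constructor
    · intro h; have := sub_left_injective h; exact this
    · intro h; rw [h]
  have hMu : M *ᵥ u = W *ᵥ w + γ • ((A * N⁻¹) *ᵥ (Aᵀ *ᵥ w)) - s := by
    rw [hu, Matrix.mulVec_sub, hk, hM, Matrix.add_mulVec, Matrix.smul_mulVec,
      ← Matrix.mulVec_mulVec]
  constructor
  · rintro ⟨h1, h2⟩
    refine ⟨?_, hsecond.mpr h2⟩
    rw [hMu, h2, hs, ← h1]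
    abel
  · rintro ⟨h1, h2⟩
    have h2' : Aᵀ *ᵥ w = r := hsecond.mp h2
    refine ⟨?_, h2'⟩
    rw [hMu, h2', hs] at h1
    have : W *ᵥ w + A *ᵥ p - g = 0 := by rw [← h1]; abel
    exact sub_eq_zero.mp this
end

section
/- Let M be symmetric positive definite, A ∈ ℝ^{m×n} of rank n, and suppose V, Q, B satisfy the generalized Golub–Kahan bidiagonalization relations A Q = M V [B; 0], Aᵀ V = N Q [Bᵀ, 0], Vᵀ M V = I_m, Qᵀ N Q = I_n, with B invertible. Then the saddle-point system M u + A p = 0, Aᵀ u = b is equivalent, under u = V ẑ and p = Q ŷ, to the reduced system ẑ₁ + B ŷ = 0, Bᵀ ẑ₁ = Qᵀ b, with ẑ = (ẑ₁, 0), i.e. the last m−n components of ẑ vanish. -/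
open Matrix

/-
With `u = V ẑ` and `p = Q ŷ`, the bidiagonalization relations turn the two block equations into
`(M V)(ẑ + [B; 0] ŷ) = 0` and `(N Q)(Bᵀ ẑ₁) = b`. The normalizations `Vᵀ (M V) = 1` and
`Qᵀ (N Q) = 1` make `M V` and `N Q` invertible with inverses `Vᵀ` and `Qᵀ`, so these are equivalent
to `ẑ + [B; 0] ŷ = 0` and `Bᵀ ẑ₁ = Qᵀ b`; the lower block of the first says `ẑ₂ = 0`.
-/

section

variable {ι R : Type*} [Fintype ι] [DecidableEq ι] [CommRing R]

theorem Matrix.mulVec_eq_iff_eq_mulVec_of_mul_eq_one {L W : Matrix ι ι R} (h : L * W = 1)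
    {x y : ι → R} : W *ᵥ x = y ↔ x = L *ᵥ y := by
  constructor
  · rintro rfl
    rw [mulVec_mulVec, h, one_mulVec]
  · rintro rfl
    rw [mulVec_mulVec, mul_eq_one_comm.mp h, one_mulVec]

end

theorem Matrix.add_fromRows_zero_mulVec_eq_zero_iff {m n k R : Type*} [Fintype n] [Semiring R]
    (B : Matrix m n R) (z : m ⊕ k → R) (y : n → R) :
    z + fromRows B 0 *ᵥ y = 0 ↔ z ∘ Sum.inl + B *ᵥ y = 0 ∧ ∀ i, z (Sum.inr i) = 0 := by
  simp only [fromRows_mulVec, zero_mulVec, funext_iff, Sum.forall, Pi.add_apply,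
    Pi.zero_apply, Function.comp_apply, Sum.elim_inl, Sum.elim_inr, add_zero]

theorem stmt_5_general {n k : ℕ}
    (M : Matrix (Fin n ⊕ Fin k) (Fin n ⊕ Fin k) ℝ)
    (A : Matrix (Fin n ⊕ Fin k) (Fin n) ℝ)
    (N B : Matrix (Fin n) (Fin n) ℝ)
    (V : Matrix (Fin n ⊕ Fin k) (Fin n ⊕ Fin k) ℝ)
    (Q : Matrix (Fin n) (Fin n) ℝ)
    (b : Fin n → ℝ)
    (hAQ : A * Q = M * V * Matrix.fromRows B (0 : Matrix (Fin k) (Fin n) ℝ))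
    (hAV : Aᵀ * V = N * Q * Matrix.fromCols Bᵀ (0 : Matrix (Fin n) (Fin k) ℝ))
    (hV : Vᵀ * M * V = 1) (hQ : Qᵀ * N * Q = 1)
    (zhat : Fin n ⊕ Fin k → ℝ) (yhat : Fin n → ℝ)
    (u : Fin n ⊕ Fin k → ℝ) (p : Fin n → ℝ)
    (hu : u = V *ᵥ zhat) (hp : p = Q *ᵥ yhat) :
    (M *ᵥ u + A *ᵥ p = 0 ∧ Aᵀ *ᵥ u = b) ↔
      ((zhat ∘ Sum.inl) + B *ᵥ yhat = 0 ∧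
        Bᵀ *ᵥ (zhat ∘ Sum.inl) = Qᵀ *ᵥ b ∧
        ∀ i : Fin k, zhat (Sum.inr i) = 0) := by
  subst hu hp
  have first_row : M *ᵥ (V *ᵥ zhat) + A *ᵥ (Q *ᵥ yhat) =
      (M * V) *ᵥ (zhat + fromRows B (0 : Matrix (Fin k) (Fin n) ℝ) *ᵥ yhat) := by
    rw [mulVec_add, mulVec_mulVec, mulVec_mulVec, mulVec_mulVec, hAQ, Matrix.mul_assoc]
  have second_row : Aᵀ *ᵥ (V *ᵥ zhat) = (N * Q) *ᵥ (Bᵀ *ᵥ (zhat ∘ Sum.inl)) := by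
    rw [mulVec_mulVec, hAV, ← mulVec_mulVec, fromCols_mulVec, zero_mulVec, add_zero]
  rw [first_row, second_row,
    mulVec_eq_iff_eq_mulVec_of_mul_eq_one (by rwa [← Matrix.mul_assoc] : Vᵀ * (M * V) = 1),
    mulVec_eq_iff_eq_mulVec_of_mul_eq_one (by rwa [← Matrix.mul_assoc] : Qᵀ * (N * Q) = 1),
    mulVec_zero, add_fromRows_zero_mulVec_eq_zero_iff, and_right_comm, and_assoc]

/-- Rows of the m-dimensional space are indexed by `Fin n ⊕ Fin k` (so `m = n + k`). -/
theorem stmt_5 {n k : ℕ}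
    (M : Matrix (Fin n ⊕ Fin k) (Fin n ⊕ Fin k) ℝ)
    (A : Matrix (Fin n ⊕ Fin k) (Fin n) ℝ)
    (N B : Matrix (Fin n) (Fin n) ℝ)
    (V : Matrix (Fin n ⊕ Fin k) (Fin n ⊕ Fin k) ℝ)
    (Q : Matrix (Fin n) (Fin n) ℝ)
    (b : Fin n → ℝ)
    (hM : M.PosDef) (hN : N.PosDef)
    (hA : A.rank = n)
    (hbidiag : ∀ i j : Fin n, (j : ℕ) ≠ i → (j : ℕ) ≠ i + 1 → B i j = 0)
    (hB : IsUnit B)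
    (hAQ : A * Q = M * V * Matrix.fromRows B (0 : Matrix (Fin k) (Fin n) ℝ))
    (hAV : Aᵀ * V = N * Q * Matrix.fromCols Bᵀ (0 : Matrix (Fin n) (Fin k) ℝ))
    (hV : Vᵀ * M * V = 1) (hQ : Qᵀ * N * Q = 1)
    (zhat : Fin n ⊕ Fin k → ℝ) (yhat : Fin n → ℝ)
    (u : Fin n ⊕ Fin k → ℝ) (p : Fin n → ℝ)
    (hu : u = V *ᵥ zhat) (hp : p = Q *ᵥ yhat) :
    (M *ᵥ u + A *ᵥ p = 0 ∧ Aᵀ *ᵥ u = b) ↔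
      ((zhat ∘ Sum.inl) + B *ᵥ yhat = 0 ∧
        Bᵀ *ᵥ (zhat ∘ Sum.inl) = Qᵀ *ᵥ b ∧
        ∀ i : Fin k, zhat (Sum.inr i) = 0) :=
  stmt_5_general M A N B V Q b hAQ hAV hV hQ zhat yhat u p hu hp
end

section
/- Let W be symmetric positive semi-definite and A ∈ ℝ^{m×n}. The saddle-point matrix [W, A; Aᵀ, 0] is invertible if and only if ker(W) ∩ ker(Aᵀ) = {0} and A has full column rank. -/
open Matrix

lemma aux_rank_iff {m n : ℕ} (A : Matrix (Fin m) (Fin n) ℝ) :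
    A.rank = n ↔ ∀ x : Fin n → ℝ, A *ᵥ x = 0 → x = 0 := by
  have hd := LinearMap.finrank_range_add_finrank_ker A.mulVecLin
  rw [Matrix.rank]
  rw [Module.finrank_fintype_fun_eq_card, Fintype.card_fin] at hd
  constructor
  · intro h x hx
    rw [h] at hd
    have hker : LinearMap.ker A.mulVecLin = ⊥ :=
      Submodule.finrank_eq_zero.mp (by omega)
    have : x ∈ LinearMap.ker A.mulVecLin := by simpa [Matrix.mulVecLin_apply] using hx
    simpa [hker] using this
  · intro h
    have hker : LinearMap.ker A.mulVecLin = ⊥ := by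
      rw [Submodule.eq_bot_iff]
      intro x hx
      exact h x (by simpa [Matrix.mulVecLin_apply] using hx)
    rw [hker] at hd
    simp at hd
    omega

theorem stmt_13 {m n : ℕ} (hmn : n ≤ m)
    (W : Matrix (Fin m) (Fin m) ℝ) (A : Matrix (Fin m) (Fin n) ℝ)
    (hW : W.PosSemidef) :
    IsUnit (fromBlocks W A Aᵀ (0 : Matrix (Fin n) (Fin n) ℝ)) ↔
      ((∀ v : Fin m → ℝ, W *ᵥ v = 0 → Aᵀ *ᵥ v = 0 → v = 0) ∧ A.rank = n) := by
  set M := fromBlocks W A Aᵀ (0 : Matrix (Fin n) (Fin n) ℝ) with hM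
  rw [← Matrix.mulVec_injective_iff_isUnit]
  have hinj : Function.Injective M.mulVec ↔ ∀ x, M *ᵥ x = 0 → x = 0 := by
    rw [← Matrix.coe_mulVecLin]
    rw [← LinearMap.ker_eq_bot, LinearMap.ker_eq_bot']
  rw [hinj, aux_rank_iff A]
  have hblock : ∀ (u : Fin m → ℝ) (v : Fin n → ℝ),
      M *ᵥ (Sum.elim u v) = Sum.elim (W *ᵥ u + A *ᵥ v) (Aᵀ *ᵥ u) := by
    intro u v
    rw [hM, fromBlocks_mulVec]
    simp
  constructor
  · intro h
    refine ⟨fun v hv1 hv2 => ?_, fun x hx => ?_⟩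
    · have := h (Sum.elim v 0) (by rw [hblock]; simp [hv1, hv2])
      exact funext fun i => congr_fun this (Sum.inl i)
    · have := h (Sum.elim 0 x) (by rw [hblock]; simp [hx])
      exact funext fun i => congr_fun this (Sum.inr i)
  · rintro ⟨hker, hA⟩ x hx
    set u : Fin m → ℝ := x ∘ Sum.inl
    set v : Fin n → ℝ := x ∘ Sum.inr
    have hxe : x = Sum.elim u v := by funext i; cases i <;> rfl
    rw [hxe, hblock] at hx
    have h1 : W *ᵥ u + A *ᵥ v = 0 := funext fun i => congr_fun hx (Sum.inl i)
    have h2 : Aᵀ *ᵥ u = 0 := funext fun i => congr_fun hx (Sum.inr i)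
    have hq : u ⬝ᵥ (W *ᵥ u) = 0 := by
      have := congr_arg (fun w => u ⬝ᵥ w) h1
      simp only [dotProduct_add, dotProduct_zero] at this
      have h3 : u ⬝ᵥ (A *ᵥ v) = 0 := by
        rw [dotProduct_mulVec, ← Matrix.mulVec_transpose, h2]
        simp
      linarith [this, h3]
    have hWu : W *ᵥ u = 0 := by
      have := (hW.dotProduct_mulVec_zero_iff u).mp (by simpa using hq)
      exact this
    have hu : u = 0 := hker u hWu h2
    have hAv : A *ᵥ v = 0 := by
      rw [hu] at h1; simpa using h1
    have hv : v = 0 := hA v hAv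
    rw [hxe, hu, hv]; simp
end

section
/- Let M be symmetric positive definite, N symmetric positive definite, and suppose vectors v_1, …, v_k ∈ ℝ^m and q_1, …, q_{k+1} ∈ ℝ^n and positive scalars α_j, β_j are generated by the GKB recurrences: α_1 M v_1 = A q_1, and for each j: β_{j+1} N q_{j+1} = Aᵀ v_j − α_j N q_j, α_{j+1} M v_{j+1} = A q_{j+1} − β_{j+1} M v_j, with ‖v_j‖_M = 1 and ‖q_j‖_N = 1. Then the vectors q_j are pairwise N-orthogonal and the vectors v_j are pairwise M-orthogonal: q_iᵀ N q_j = δ_{ij} and v_iᵀ M v_j = δ_{ij}. -/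
open Matrix

theorem stmt_14 {m n : ℕ} (M : Matrix (Fin m) (Fin m) ℝ) (N : Matrix (Fin n) (Fin n) ℝ)
    (A : Matrix (Fin m) (Fin n) ℝ) (hM : M.PosDef) (hN : N.PosDef)
    (k : ℕ) (v : ℕ → Fin m → ℝ) (q : ℕ → Fin n → ℝ) (α β : ℕ → ℝ)
    (hα : ∀ j, 1 ≤ j → j ≤ k → 0 < α j)
    (hβ : ∀ j, 2 ≤ j → j ≤ k + 1 → 0 < β j)
    (hinit : α 1 • (M *ᵥ v 1) = A *ᵥ q 1)
    (hqrec : ∀ j, 1 ≤ j → j ≤ k →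
      β (j + 1) • (N *ᵥ q (j + 1)) = Aᵀ *ᵥ v j - α j • (N *ᵥ q j))
    (hvrec : ∀ j, 1 ≤ j → j < k →
      α (j + 1) • (M *ᵥ v (j + 1)) = A *ᵥ q (j + 1) - β (j + 1) • (M *ᵥ v j))
    (hvnorm : ∀ j, 1 ≤ j → j ≤ k → Real.sqrt (v j ⬝ᵥ (M *ᵥ v j)) = 1)
    (hqnorm : ∀ j, 1 ≤ j → j ≤ k + 1 → Real.sqrt (q j ⬝ᵥ (N *ᵥ q j)) = 1) :
    (∀ i j, 1 ≤ i → i ≤ k + 1 → 1 ≤ j → j ≤ k + 1 →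
      q i ⬝ᵥ (N *ᵥ q j) = if i = j then 1 else 0) ∧
    (∀ i j, 1 ≤ i → i ≤ k → 1 ≤ j → j ≤ k →
      v i ⬝ᵥ (M *ᵥ v j) = if i = j then 1 else 0) := by
  have hMt : Mᵀ = M := by simpa using hM.1.eq
  have hNt : Nᵀ = N := by simpa using hN.1.eq
  -- symmetry of the bilinear forms
  have hMsym : ∀ x y, x ⬝ᵥ (M *ᵥ y) = y ⬝ᵥ (M *ᵥ x) := by
    intro x y
    rw [dotProduct_mulVec, ← vecMul_transpose, hMt, dotProduct_comm]
  have hNsym : ∀ x y, x ⬝ᵥ (N *ᵥ y) = y ⬝ᵥ (N *ᵥ x) := by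
    intro x y
    rw [dotProduct_mulVec, ← vecMul_transpose, hNt, dotProduct_comm]
  -- diagonal values
  have hvdiag : ∀ j, 1 ≤ j → j ≤ k → v j ⬝ᵥ (M *ᵥ v j) = 1 := fun j h1 h2 =>
    Real.sqrt_eq_one.mp (hvnorm j h1 h2)
  have hqdiag : ∀ j, 1 ≤ j → j ≤ k + 1 → q j ⬝ᵥ (N *ᵥ q j) = 1 := fun j h1 h2 =>
    Real.sqrt_eq_one.mp (hqnorm j h1 h2)
  -- A *ᵥ q i expressed via v's
  have hAq : ∀ i, 2 ≤ i → i ≤ k →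
      A *ᵥ q i = α i • (M *ᵥ v i) + β i • (M *ᵥ v (i - 1)) := by
    intro i h2 hk
    obtain ⟨i', rfl⟩ : ∃ i', i = i' + 1 := ⟨i - 1, by omega⟩
    have h := hvrec i' (by omega) (by omega)
    rw [eq_sub_iff_add_eq] at h
    simp only [Nat.add_sub_cancel]
    linear_combination (norm := module) h.symm
  -- Aᵀ *ᵥ v j expressed via q's
  have hAtv : ∀ j, 1 ≤ j → j ≤ k →
      Aᵀ *ᵥ v j = β (j + 1) • (N *ᵥ q (j + 1)) + α j • (N *ᵥ q j) := by
    intro j h1 hk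
    have h := hqrec j h1 hk
    rw [eq_sub_iff_add_eq] at h
    exact h.symm
  -- main induction
  have key : ∀ t, t ≤ k →
      ((∀ i j, 1 ≤ i → i ≤ t + 1 → 1 ≤ j → j ≤ t + 1 →
          q i ⬝ᵥ (N *ᵥ q j) = if i = j then 1 else 0) ∧
       (∀ i j, 1 ≤ i → i ≤ t → 1 ≤ j → j ≤ t →
          v i ⬝ᵥ (M *ᵥ v j) = if i = j then 1 else 0)) := by
    intro t
    induction t with
    | zero =>
      intro _
      constructor
      · intro i j hi1 hi2 hj1 hj2
        have : i = 1 := by omega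
        subst this
        have : j = 1 := by omega
        subst this
        simpa using hqdiag 1 (by omega) (by omega)
      · intro i j hi1 hi2; omega
    | succ t ih =>
      intro ht
      obtain ⟨hq', hv'⟩ := ih (by omega)
      -- Step 1: v's orthonormal up to t+1
      -- off-diagonal: v i ⬝ᵥ M v (t+1) = 0 for 1 ≤ i ≤ t
      have hvoff : ∀ i, 1 ≤ i → i ≤ t → v i ⬝ᵥ (M *ᵥ v (t + 1)) = 0 := by
        intro i hi1 hi2
        have hrec := hvrec t (by omega) (by omega)
        have hdot : α (t + 1) * (v i ⬝ᵥ (M *ᵥ v (t + 1)))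
            = v i ⬝ᵥ (A *ᵥ q (t + 1)) - β (t + 1) * (v i ⬝ᵥ (M *ᵥ v t)) := by
          rw [← smul_eq_mul, ← dotProduct_smul, hrec, dotProduct_sub, dotProduct_smul,
            smul_eq_mul]
        have hAqv : v i ⬝ᵥ (A *ᵥ q (t + 1)) = β (i + 1) * (if i = t then 1 else 0) := by
          have h1 : v i ⬝ᵥ (A *ᵥ q (t + 1)) = q (t + 1) ⬝ᵥ (Aᵀ *ᵥ v i) := by
            rw [dotProduct_mulVec, mulVec_transpose, dotProduct_comm]
          rw [h1, hAtv i hi1 (by omega), dotProduct_add, dotProduct_smul, dotProduct_smul,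
            smul_eq_mul, smul_eq_mul]
          have e1 : q (t + 1) ⬝ᵥ (N *ᵥ q (i + 1)) = if i = t then 1 else 0 := by
            rw [hq' (t + 1) (i + 1) (by omega) (by omega) (by omega) (by omega)]
            by_cases h : i = t <;> simp [h] <;> omega
          have e2 : q (t + 1) ⬝ᵥ (N *ᵥ q i) = 0 := by
            rw [hq' (t + 1) i (by omega) (by omega) (by omega) (by omega)]
            simp; omega
          rw [e1, e2]; ring
        have hvt : v i ⬝ᵥ (M *ᵥ v t) = if i = t then 1 else 0 :=
          hv' i t hi1 hi2 (by omega) (by omega)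
        have : α (t + 1) * (v i ⬝ᵥ (M *ᵥ v (t + 1))) = 0 := by
          rw [hdot, hAqv, hvt]; by_cases h : i = t <;> simp [h]
        have hαpos := hα (t + 1) (by omega) (by omega)
        exact (mul_eq_zero.mp this).resolve_left (ne_of_gt hαpos)
      have hvnew : ∀ i j, 1 ≤ i → i ≤ t + 1 → 1 ≤ j → j ≤ t + 1 →
          v i ⬝ᵥ (M *ᵥ v j) = if i = j then 1 else 0 := by
        intro i j hi1 hi2 hj1 hj2
        rcases Nat.lt_or_ge i (t + 1) with hi | hi
        · rcases Nat.lt_or_ge j (t + 1) with hj | hj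
          · exact hv' i j hi1 (by omega) hj1 (by omega)
          · have hj' : j = t + 1 := by omega
            subst hj'
            rw [hvoff i hi1 (by omega), if_neg (by omega : ¬ i = t + 1)]
        · have hi' : i = t + 1 := by omega
          subst hi'
          rcases Nat.lt_or_ge j (t + 1) with hj | hj
          · rw [hMsym, hvoff j hj1 (by omega), if_neg (by omega : ¬ t + 1 = j)]
          · have hj' : j = t + 1 := by omega
            subst hj'
            simpa using hvdiag (t + 1) (by omega) (by omega)
      -- Step 2: q's orthonormal up to t+2
      -- off-diagonal: q i ⬝ᵥ N q (t+2) = 0 for 1 ≤ i ≤ t+1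
      have hqoff : ∀ i, 1 ≤ i → i ≤ t + 1 → q i ⬝ᵥ (N *ᵥ q (t + 2)) = 0 := by
        intro i hi1 hi2
        have hrec := hqrec (t + 1) (by omega) (by omega)
        have hdot : β (t + 2) * (q i ⬝ᵥ (N *ᵥ q (t + 2)))
            = q i ⬝ᵥ (Aᵀ *ᵥ v (t + 1)) - α (t + 1) * (q i ⬝ᵥ (N *ᵥ q (t + 1))) := by
          rw [← smul_eq_mul, ← dotProduct_smul]
          have : (t + 1) + 1 = t + 2 := rfl
          rw [← this, hrec, dotProduct_sub, dotProduct_smul, smul_eq_mul]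
        have hqAv : q i ⬝ᵥ (Aᵀ *ᵥ v (t + 1)) = v (t + 1) ⬝ᵥ (A *ᵥ q i) := by
          rw [dotProduct_mulVec, vecMul_transpose, dotProduct_comm]
        have hvAq : v (t + 1) ⬝ᵥ (A *ᵥ q i) = α i * (if i = t + 1 then 1 else 0) := by
          rcases Nat.lt_or_ge i 2 with h2 | h2
          · have : i = 1 := by omega
            subst this
            rw [← hinit, dotProduct_smul, smul_eq_mul,
              hvnew (t + 1) 1 (by omega) (by omega) (by omega) (by omega)]
            by_cases h : t = 0
            · subst h; norm_num
            · rw [if_neg (by omega : ¬ t + 1 = 1), if_neg (by omega : ¬ 1 = t + 1), mul_zero]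
          · rw [hAq i h2 (by omega), dotProduct_add, dotProduct_smul, dotProduct_smul,
              smul_eq_mul, smul_eq_mul,
              hvnew (t + 1) i (by omega) (by omega) (by omega) (by omega),
              hvnew (t + 1) (i - 1) (by omega) (by omega) (by omega) (by omega)]
            have : ¬ (t + 1 = i - 1) := by omega
            rw [if_neg this]
            by_cases h : i = t + 1
            · rw [if_pos h.symm, if_pos h]; ring
            · rw [if_neg (fun hh => h hh.symm), if_neg h]; ring
        have hqt : q i ⬝ᵥ (N *ᵥ q (t + 1)) = if i = t + 1 then 1 else 0 :=
          hq' i (t + 1) hi1 hi2 (by omega) (by omega)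
        have : β (t + 2) * (q i ⬝ᵥ (N *ᵥ q (t + 2))) = 0 := by
          rw [hdot, hqAv, hvAq, hqt]
          by_cases h : i = t + 1
          · subst h; ring
          · simp [h]
        have hβpos := hβ (t + 2) (by omega) (by omega)
        exact (mul_eq_zero.mp this).resolve_left (ne_of_gt hβpos)
      refine ⟨?_, hvnew⟩
      intro i j hi1 hi2 hj1 hj2
      rcases Nat.lt_or_ge i (t + 2) with hi | hi
      · rcases Nat.lt_or_ge j (t + 2) with hj | hj
        · exact hq' i j hi1 (by omega) hj1 (by omega)
        · have hj' : j = t + 2 := by omega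
          subst hj'
          rw [hqoff i hi1 (by omega), if_neg (by omega : ¬ i = t + 2)]
      · have hi' : i = t + 2 := by omega
        subst hi'
        rcases Nat.lt_or_ge j (t + 2) with hj | hj
        · rw [hNsym, hqoff j hj1 (by omega), if_neg (by omega : ¬ t + 2 = j)]
        · have hj' : j = t + 2 := by omega
          subst hj'
          simpa using hqdiag (t + 2) (by omega) (by omega)
  obtain ⟨hq, hv⟩ := key k le_rfl
  exact ⟨hq, hv⟩
end

section
/- In the GKB algorithm, let the iterates be p_k = −Σ_{j=1}^{k} ζ_j d_j and u_k = Σ_{j=1}^{k} ζ_j v_j, let u = V ẑ be the exact solution, and suppose the bidiagonalization relations hold, in particular Aᵀ V_k = N Q_k B_kᵀ + β_{k+1} N q_{k+1} e_kᵀ. Then Aᵀ u_k − b = ζ_k β_{k+1} N q_{k+1}, so the constraint residual norm satisfies ‖Aᵀ u_k − b‖_{N⁻¹} = |ζ_k| β_{k+1}. -/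
open Matrix

theorem stmt_16 {m n : ℕ} (N : Matrix (Fin n) (Fin n) ℝ) (A : Matrix (Fin m) (Fin n) ℝ)
    (hN : N.PosDef)
    (k : ℕ) (hk : 1 ≤ k)
    (v : ℕ → Fin m → ℝ) (q : ℕ → Fin n → ℝ) (α β : ℕ → ℝ) (ζ : ℕ → ℝ)
    (hα : ∀ j, 1 ≤ j → 0 < α j) (hβ : ∀ j, 0 ≤ β j)
    (hζ1 : ζ 1 = β 1 / α 1)
    (hζrec : ∀ j, 1 ≤ j → ζ (j + 1) = -(β (j + 1) / α (j + 1)) * ζ j)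
    (b : Fin n → ℝ) (hb : b = β 1 • (N *ᵥ q 1))
    (hthree : ∀ j, 1 ≤ j → j ≤ k →
      Aᵀ *ᵥ v j = α j • (N *ᵥ q j) + β (j + 1) • (N *ᵥ q (j + 1)))
    (hqnorm : Real.sqrt (q (k + 1) ⬝ᵥ (N *ᵥ q (k + 1))) = 1)
    (uk : Fin m → ℝ) (huk : uk = ∑ j ∈ Finset.Icc 1 k, ζ j • v j) :
    Aᵀ *ᵥ uk - b = (ζ k * β (k + 1)) • (N *ᵥ q (k + 1)) ∧
    Real.sqrt ((Aᵀ *ᵥ uk - b) ⬝ᵥ (N⁻¹ *ᵥ (Aᵀ *ᵥ uk - b))) = |ζ k| * β (k + 1) := by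
  have gen : ∀ K, 1 ≤ K → (∀ j, 1 ≤ j → j ≤ K →
      Aᵀ *ᵥ v j = α j • (N *ᵥ q j) + β (j + 1) • (N *ᵥ q (j + 1))) →
      Aᵀ *ᵥ (∑ j ∈ Finset.Icc 1 K, ζ j • v j) - β 1 • (N *ᵥ q 1)
        = (ζ K * β (K + 1)) • (N *ᵥ q (K + 1)) := by
    intro K
    induction K with
    | zero => omega
    | succ K ih =>
      intro hK hthree
      rcases Nat.eq_or_lt_of_le hK with h1 | h1
      · obtain rfl : K = 0 := by omega
        simp only [Finset.Icc_self, Finset.sum_singleton]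
        rw [Matrix.mulVec_smul, hthree 1 le_rfl le_rfl]
        have hα1 : α 1 ≠ 0 := (hα 1 le_rfl).ne'
        have hz : ζ 1 * α 1 = β 1 := by rw [hζ1]; field_simp
        ext i
        simp only [Pi.add_apply, Pi.sub_apply, Pi.smul_apply, smul_eq_mul]
        linear_combination ((N *ᵥ q 1) i) * hz
      · have hK' : 1 ≤ K := by omega
        rw [Finset.sum_Icc_succ_top hK, Matrix.mulVec_add]
        have ih' := ih hK' (fun j hj hjk => hthree j hj (by omega))
        have hzero : (ζ K * β (K + 1)) + ζ (K + 1) * α (K + 1) = 0 := by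
          rw [hζrec K hK']
          have : α (K + 1) ≠ 0 := (hα (K + 1) (by omega)).ne'
          field_simp
          ring
        rw [Matrix.mulVec_smul, hthree (K + 1) (by omega) le_rfl]
        have hs : Aᵀ *ᵥ ∑ j ∈ Finset.Icc 1 K, ζ j • v j
            = (ζ K * β (K + 1)) • (N *ᵥ q (K + 1)) + β 1 • (N *ᵥ q 1) := by
          rw [← ih']; abel
        rw [hs]
        ext i
        simp only [Pi.add_apply, Pi.sub_apply, Pi.smul_apply, smul_eq_mul]
        linear_combination ((N *ᵥ q (K + 1)) i) * hzero
  have main : Aᵀ *ᵥ uk - b = (ζ k * β (k + 1)) • (N *ᵥ q (k + 1)) := by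
    rw [huk, hb]; exact gen k hk hthree
  refine ⟨main, ?_⟩
  rw [main]
  have hdet : IsUnit N.det := isUnit_iff_ne_zero.mpr hN.det_pos.ne'
  have hNinv : N⁻¹ *ᵥ ((ζ k * β (k + 1)) • (N *ᵥ q (k + 1))) = (ζ k * β (k + 1)) • q (k + 1) := by
    rw [Matrix.mulVec_smul, Matrix.mulVec_mulVec, Matrix.nonsing_inv_mul _ hdet, Matrix.one_mulVec]
  rw [hNinv, dotProduct_smul, smul_dotProduct, smul_eq_mul, smul_eq_mul]
  have hcomm : (N *ᵥ q (k + 1)) ⬝ᵥ q (k + 1) = q (k + 1) ⬝ᵥ (N *ᵥ q (k + 1)) := dotProduct_comm _ _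
  rw [hcomm, ← mul_assoc]
  rw [show ζ k * β (k + 1) * (ζ k * β (k + 1)) = (ζ k * β (k + 1))^2 by ring,
    Real.sqrt_mul (sq_nonneg _), Real.sqrt_sq_eq_abs, hqnorm, mul_one, abs_mul,
    abs_of_nonneg (hβ (k + 1))]
end

section
/- Let M, N be symmetric positive definite and suppose the full bidiagonalization relations hold: A Q = M V [B; 0], Vᵀ M V = I_m, Qᵀ N Q = I_n with B invertible upper bidiagonal and Qᵀ b = β₁ e₁. Then the GKB solution u = V_n z (with z solving Bᵀ z = β₁ e₁) and p = −Q B⁻¹ z solve the augmented system M u + A p = 0, Aᵀ u = b exactly after n steps (finite termination). -/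
/-!
Since `[B; 0] B⁻¹ = [I; 0]`, the relation `A Q = M V [B; 0]` gives `A Q B⁻¹ z = M V_n z = M u`,
which is the first equation. For the second, `Aᵀ V = N Q [Bᵀ, 0]` gives
`Aᵀ u = N Q Bᵀ z = N Q (β₁ e₁) = N Q Qᵀ b`, and `N Q Qᵀ = I` because the square matrix `Qᵀ` has
`N Q` as a left inverse by `Qᵀ N Q = I`.
-/

open Matrix

section

variable {m n k R : Type*} [Fintype n] [CommRing R]

theorem Matrix.of_inl_mulVec [Fintype k] (V : Matrix m (n ⊕ k) R) (z : n → R) :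
    (of fun i j => V i (Sum.inl j)) *ᵥ z = V *ᵥ Sum.elim z 0 := by
  funext i
  simp [mulVec, dotProduct, Fintype.sum_sum_type]

theorem Matrix.fromRows_zero_mul_inv_mulVec [DecidableEq n] {B : Matrix n n R} (hB : IsUnit B)
    (z : n → R) :
    (fromRows B (0 : Matrix k n R) * B⁻¹) *ᵥ z = Sum.elim z 0 := by
  rw [fromRows_mul, mul_nonsing_inv B ((isUnit_iff_isUnit_det B).mp hB), Matrix.zero_mul,
    fromRows_mulVec, one_mulVec, zero_mulVec]

theorem Matrix.mul_mul_transpose_eq_one [DecidableEq n] {N Q : Matrix n n R}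
    (hQ : Qᵀ * N * Q = 1) :
    N * Q * Qᵀ = 1 :=
  mul_eq_one_comm.mp (by rwa [← Matrix.mul_assoc])

end

theorem stmt_19_general {n k : ℕ} [NeZero n]
    (M : Matrix (Fin n ⊕ Fin k) (Fin n ⊕ Fin k) ℝ)
    (A : Matrix (Fin n ⊕ Fin k) (Fin n) ℝ)
    (N B : Matrix (Fin n) (Fin n) ℝ)
    (V : Matrix (Fin n ⊕ Fin k) (Fin n ⊕ Fin k) ℝ)
    (Q : Matrix (Fin n) (Fin n) ℝ)
    (b : Fin n → ℝ) (β₁ : ℝ)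
    (hB : IsUnit B)
    (hAQ : A * Q = M * V * Matrix.fromRows B (0 : Matrix (Fin k) (Fin n) ℝ))
    (hAV : Aᵀ * V = N * Q * Matrix.fromCols Bᵀ (0 : Matrix (Fin n) (Fin k) ℝ))
    (hQ : Qᵀ * N * Q = 1)
    (hQb : Qᵀ *ᵥ b = β₁ • (Pi.single (0 : Fin n) (1 : ℝ) : Fin n → ℝ))
    (z : Fin n → ℝ)
    (hz : Bᵀ *ᵥ z = β₁ • (Pi.single (0 : Fin n) (1 : ℝ) : Fin n → ℝ))
    (u : Fin n ⊕ Fin k → ℝ) (p : Fin n → ℝ)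
    (hu : u = (Matrix.of fun i (j : Fin n) => V i (Sum.inl j)) *ᵥ z)
    (hp : p = -((Q * B⁻¹) *ᵥ z)) :
    M *ᵥ u + A *ᵥ p = 0 ∧ Aᵀ *ᵥ u = b := by
  rw [of_inl_mulVec] at hu
  subst hu hp
  have hAp : A *ᵥ ((Q * B⁻¹) *ᵥ z) = M *ᵥ (V *ᵥ Sum.elim z 0) := by
    rw [mulVec_mulVec, ← Matrix.mul_assoc, hAQ, Matrix.mul_assoc (M * V),
      ← mulVec_mulVec, fromRows_zero_mul_inv_mulVec hB, mulVec_mulVec]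
  constructor
  · rw [mulVec_neg, hAp, add_neg_cancel]
  · calc Aᵀ *ᵥ (V *ᵥ Sum.elim z 0)
        = (N * Q) *ᵥ (Bᵀ *ᵥ z) := by
          rw [mulVec_mulVec, hAV, ← mulVec_mulVec, fromCols_mulVec_sumElim, mulVec_zero,
            add_zero]
      _ = (N * Q * Qᵀ) *ᵥ b := by rw [hz, ← hQb, mulVec_mulVec]
      _ = b := by rw [mul_mul_transpose_eq_one hQ, one_mulVec]

/-- Rows of the m-dimensional space are indexed by `Fin n ⊕ Fin k` (so `m = n + k ≥ n`). -/
theorem stmt_19 {n k : ℕ} [NeZero n]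
    (M : Matrix (Fin n ⊕ Fin k) (Fin n ⊕ Fin k) ℝ)
    (A : Matrix (Fin n ⊕ Fin k) (Fin n) ℝ)
    (N B : Matrix (Fin n) (Fin n) ℝ)
    (V : Matrix (Fin n ⊕ Fin k) (Fin n ⊕ Fin k) ℝ)
    (Q : Matrix (Fin n) (Fin n) ℝ)
    (b : Fin n → ℝ) (β₁ : ℝ)
    (hM : M.PosDef) (hN : N.PosDef) (hA : A.rank = n)
    (hbidiag : ∀ i j : Fin n, (j : ℕ) ≠ i → (j : ℕ) ≠ i + 1 → B i j = 0)
    (hB : IsUnit B)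
    (hAQ : A * Q = M * V * Matrix.fromRows B (0 : Matrix (Fin k) (Fin n) ℝ))
    (hAV : Aᵀ * V = N * Q * Matrix.fromCols Bᵀ (0 : Matrix (Fin n) (Fin k) ℝ))
    (hV : Vᵀ * M * V = 1) (hQ : Qᵀ * N * Q = 1)
    (hQb : Qᵀ *ᵥ b = β₁ • (Pi.single (0 : Fin n) (1 : ℝ) : Fin n → ℝ))
    (z : Fin n → ℝ)
    (hz : Bᵀ *ᵥ z = β₁ • (Pi.single (0 : Fin n) (1 : ℝ) : Fin n → ℝ))
    (u : Fin n ⊕ Fin k → ℝ) (p : Fin n → ℝ)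
    (hu : u = (Matrix.of fun i (j : Fin n) => V i (Sum.inl j)) *ᵥ z)
    (hp : p = -((Q * B⁻¹) *ᵥ z)) :
    M *ᵥ u + A *ᵥ p = 0 ∧ Aᵀ *ᵥ u = b :=
  stmt_19_general M A N B V Q b β₁ hB hAQ hAV hQ hQb z hz u p hu hp
end
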